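/- arXiv:1711.04307 — 3 statements merged into one kernel-verified Lean document; each statement's English description precedes it below -/
import Mathlib

section
/- The second derivative of ℓ satisfies ℓ''(r) = -2r·(1/2 - r)^{-4}·e^{-(1/2-r)^{-1}} for 0 ≤ r < 1/2 and ℓ''(r) = 0 for r ≥ 1/2; ℓ'' < 0 on (0,1/2); the minimum of ℓ'' over [0,∞) is attained at r = √3/6 with value -3^{-1/2}(3+√3)^4·e^{-(3+√3)}; and for all r ≥ 0 one has ℓ''(r) ≥ -3^{-1/2}(3+√3)^4·e^{-(3+√3)} > -20e^{-2}. -/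
/-- The modifier function `ℓ` from the paper:
`ℓ(r) = e^{-2} - e^{-2/(1-2r)}` for `r < 1/2` and `ℓ(r) = e^{-2}` for `r ≥ 1/2`. -/
noncomputable def ell : ℝ → ℝ := fun r =>
  if r < 1/2 then Real.exp (-2) - Real.exp (-2 / (1 - 2*r)) else Real.exp (-2)

/-!
Writing `ℓ(r) = e^{-2} - g(1/2 - r)` with `g = expNegInvGlue` (`g x = e^{-1/x}` for `x > 0`,
`0` otherwise), one gets `ℓ''(r) = -g''(1/2 - r)`, and in the variable `u = (1/2 - r)⁻¹ ≥ 2`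
this is `-φ(u)` with `φ(u) = (u - 2) u³ e^{-u}` (`ellProfile`). Since
`φ'(u) = -u² (u² - 6u + 6) e^{-u}`, `φ` increases on `[2, 3 + √3]` and decreases afterwards, so
the minimum of `ℓ''` is `-φ(3 + √3)`, attained at `(1/2 - r)⁻¹ = 3 + √3`, i.e. `r = √3/6`.
The final numerical bound amounts to `(1 + √3)(3 + √3)³ < 20 e^{1 + √3}`.
-/

open Real Polynomial

namespace expNegInvGlue

theorem hasDerivAt_inv_sq_mul (x : ℝ) :
    HasDerivAt expNegInvGlue (x⁻¹ ^ 2 * expNegInvGlue x) x := by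
  simpa using hasDerivAt_polynomial_eval_inv_mul (1 : ℝ[X]) x

theorem deriv_eq : deriv expNegInvGlue = fun x => x⁻¹ ^ 2 * expNegInvGlue x :=
  funext fun x => (hasDerivAt_inv_sq_mul x).deriv

theorem hasDerivAt_deriv (x : ℝ) :
    HasDerivAt (deriv expNegInvGlue) ((x⁻¹ ^ 4 - 2 * x⁻¹ ^ 3) * expNegInvGlue x) x := by
  rw [deriv_eq]
  convert hasDerivAt_polynomial_eval_inv_mul (X ^ 2 : ℝ[X]) x using 1
  · funext y
    simp
  · congr 1
    simp only [derivative_X_pow, eval_mul, eval_pow, eval_X, eval_sub, eval_C]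
    ring

theorem eq_exp_neg_inv {x : ℝ} (hx : 0 < x) : expNegInvGlue x = exp (-x⁻¹) := by
  simp [expNegInvGlue, not_le.mpr hx]

end expNegInvGlue

theorem ell_eq_sub_expNegInvGlue : ell = fun r => exp (-2) - expNegInvGlue (1/2 - r) := by
  funext r
  unfold ell
  by_cases h : r < 1/2
  · have hpos : 0 < 1/2 - r := by linarith
    rw [if_pos h, expNegInvGlue.eq_exp_neg_inv hpos]
    congr 2
    field_simp
  · rw [if_neg h, expNegInvGlue.zero_of_nonpos (by linarith), sub_zero]

theorem deriv_deriv_ell (r : ℝ) :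
    deriv (deriv ell) r
      = -(((1/2 - r)⁻¹ ^ 4 - 2 * (1/2 - r)⁻¹ ^ 3) * expNegInvGlue (1/2 - r)) := by
  have hderiv : deriv ell = fun r => deriv expNegInvGlue (1/2 - r) := by
    funext r
    rw [ell_eq_sub_expNegInvGlue, deriv_const_sub, deriv_comp_const_sub, neg_neg]
  rw [hderiv, deriv_comp_const_sub, (expNegInvGlue.hasDerivAt_deriv _).deriv]

theorem deriv_deriv_ell_of_half_le {r : ℝ} (hr : 1/2 ≤ r) : deriv (deriv ell) r = 0 := by
  rw [deriv_deriv_ell, expNegInvGlue.zero_of_nonpos (by linarith), mul_zero, neg_zero]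

theorem deriv_deriv_ell_of_lt_half {r : ℝ} (hr : r < 1/2) :
    deriv (deriv ell) r = -2 * r * (1/2 - r) ^ (-4 : ℤ) * exp (-(1/2 - r)⁻¹) := by
  have hpos : 0 < 1/2 - r := by linarith
  rw [deriv_deriv_ell, expNegInvGlue.eq_exp_neg_inv hpos, zpow_neg, inv_pow]
  field_simp
  ring

noncomputable def ellProfile (u : ℝ) : ℝ := (u - 2) * u ^ 3 * exp (-u)

theorem deriv_deriv_ell_eq_neg_ellProfile {r : ℝ} (hr : r < 1/2) :
    deriv (deriv ell) r = -ellProfile (1/2 - r)⁻¹ := by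
  rw [deriv_deriv_ell, expNegInvGlue.eq_exp_neg_inv (by linarith), ellProfile]
  ring

theorem hasDerivAt_ellProfile (u : ℝ) :
    HasDerivAt ellProfile (-(u ^ 2 * (u ^ 2 - 6 * u + 6) * exp (-u))) u := by
  have hpoly :
      HasDerivAt (fun u : ℝ => (u - 2) * u ^ 3) (1 * u ^ 3 + (u - 2) * (3 * u ^ 2)) u := by
    simpa using ((hasDerivAt_id u).sub_const 2).fun_mul (hasDerivAt_pow 3 u)
  exact (hpoly.fun_mul (hasDerivAt_neg u).exp).congr_deriv (by ring)

theorem ellProfile_le_ellProfile_three_add_sqrt_three {u : ℝ} (hu : 2 ≤ u) :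
    ellProfile u ≤ ellProfile (3 + √3) := by
  have hs1 : 1 < √3 := by rw [lt_sqrt zero_le_one]; norm_num
  have hs2 : √3 ^ 2 = 3 := sq_sqrt (by norm_num)
  have hfactor (v : ℝ) : v ^ 2 - 6 * v + 6 = (v - (3 - √3)) * (v - (3 + √3)) := by
    linear_combination hs2
  have hdiff : Differentiable ℝ ellProfile := fun u => (hasDerivAt_ellProfile u).differentiableAt
  have hmono : MonotoneOn ellProfile (Set.Icc 2 (3 + √3)) := by
    refine monotoneOn_of_deriv_nonneg (convex_Icc _ _) hdiff.continuous.continuousOn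
      hdiff.differentiableOn fun v hv => ?_
    rw [interior_Icc] at hv
    rw [(hasDerivAt_ellProfile v).deriv, hfactor, neg_nonneg]
    have : (v - (3 - √3)) * (v - (3 + √3)) ≤ 0 :=
      mul_nonpos_of_nonneg_of_nonpos (by linarith [hv.1]) (by linarith [hv.2])
    exact mul_nonpos_of_nonpos_of_nonneg
      (mul_nonpos_of_nonneg_of_nonpos (sq_nonneg v) this) (exp_pos _).le
  have hanti : AntitoneOn ellProfile (Set.Ici (3 + √3)) := by
    refine antitoneOn_of_deriv_nonpos (convex_Ici _) hdiff.continuous.continuousOn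
      hdiff.differentiableOn fun v hv => ?_
    rw [interior_Ici, Set.mem_Ioi] at hv
    rw [(hasDerivAt_ellProfile v).deriv, hfactor, neg_nonpos]
    have : 0 ≤ (v - (3 - √3)) * (v - (3 + √3)) := mul_nonneg (by linarith) (by linarith)
    positivity
  rcases le_total u (3 + √3) with h | h
  · exact hmono ⟨hu, h⟩ ⟨by linarith, le_rfl⟩ h
  · exact hanti Set.self_mem_Ici h h

theorem ellProfile_three_add_sqrt_three :
    ellProfile (3 + √3) = (√3)⁻¹ * (3 + √3) ^ 4 * exp (-(3 + √3)) := by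
  have hs : √3 ^ 2 = 3 := sq_sqrt (by norm_num)
  have hne : √3 ≠ 0 := by positivity
  rw [ellProfile]
  field_simp
  linear_combination hs

theorem ellProfile_three_add_sqrt_three_lt : ellProfile (3 + √3) < 20 * exp (-2) := by
  have hs : √3 < 1.7321 := by rw [sqrt_lt' (by norm_num)]; norm_num
  have hs' : 1.732 < √3 := by rw [lt_sqrt (by norm_num)]; norm_num
  -- the first six terms of the Taylor series already give `e^{1.732} ≥ 5.6`
  have hexp_sqrt : 5.6 < exp √3 := by
    have := sum_le_exp_of_nonneg (x := 1.732) (by norm_num) 6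
    simp only [Finset.sum_range_succ, Finset.sum_range_zero, Nat.factorial] at this
    norm_num at this
    linarith [exp_lt_exp.mpr hs']
  have hexp_one : 2.7182 < exp 1 := lt_trans (by norm_num) exp_one_gt_d9
  have hsplit : exp (-2) = exp 1 * exp √3 * exp (-(3 + √3)) := by
    rw [← exp_add, ← exp_add]
    ring_nf
  rw [ellProfile, hsplit, ← mul_assoc]
  refine mul_lt_mul_of_pos_right ?_ (exp_pos _)
  have h₀ : 0 ≤ 3 + √3 - 2 := by linarith
  calc (3 + √3 - 2) * (3 + √3) ^ 3 < (3 + 1.7321 - 2) * (3 + 1.7321) ^ 3 := by gcongr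
    _ < 20 * (2.7182 * 5.6) := by norm_num
    _ < 20 * (exp 1 * exp √3) := by gcongr

theorem inv_half_sub_sqrt_three_div_six : (1/2 - √3 / 6)⁻¹ = 3 + √3 := by
  have hs : √3 ^ 2 = 3 := sq_sqrt (by norm_num)
  rw [inv_eq_of_mul_eq_one_right]
  linear_combination -hs / 6

theorem neg_ellProfile_three_add_sqrt_three_le_deriv_deriv_ell {r : ℝ} (hr : 0 ≤ r) :
    -ellProfile (3 + √3) ≤ deriv (deriv ell) r := by
  rcases lt_or_ge r (1/2) with h | h
  · rw [deriv_deriv_ell_eq_neg_ellProfile h, neg_le_neg_iff]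
    apply ellProfile_le_ellProfile_three_add_sqrt_three
    rw [le_inv_comm₀ (by norm_num) (by linarith)]
    linarith
  · rw [deriv_deriv_ell_of_half_le h, neg_nonpos, ellProfile]
    have : 0 ≤ 3 + √3 - 2 := by linarith [sqrt_nonneg 3]
    positivity

/-- `ℓ''(r) = -2r (1/2 - r)⁻⁴ e^{-(1/2-r)⁻¹}` on `[0, 1/2)` and `ℓ''(r) = 0` for `r ≥ 1/2`;
`ℓ'' < 0` on `(0, 1/2)`; the minimum of `ℓ''` over `[0,∞)` is attained at `r = √3/6` with value
`-3^{-1/2}(3+√3)⁴ e^{-(3+√3)}`, and this value is `> -20 e^{-2}`. -/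
theorem deriv2_ell_properties :
    (∀ r : ℝ, 0 ≤ r → r < 1/2 →
      deriv (deriv ell) r = -2*r * (1/2 - r) ^ (-4 : ℤ) * Real.exp (-(1/2 - r)⁻¹)) ∧
    (∀ r : ℝ, 1/2 ≤ r → deriv (deriv ell) r = 0) ∧
    (∀ r : ℝ, 0 < r → r < 1/2 → deriv (deriv ell) r < 0) ∧
    deriv (deriv ell) (Real.sqrt 3 / 6)
      = -(Real.sqrt 3)⁻¹ * (3 + Real.sqrt 3)^4 * Real.exp (-(3 + Real.sqrt 3)) ∧
    (∀ r : ℝ, 0 ≤ r →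
      deriv (deriv ell) r
        ≥ -(Real.sqrt 3)⁻¹ * (3 + Real.sqrt 3)^4 * Real.exp (-(3 + Real.sqrt 3))) ∧
    -(Real.sqrt 3)⁻¹ * (3 + Real.sqrt 3)^4 * Real.exp (-(3 + Real.sqrt 3))
      > -20 * Real.exp (-2) := by
  simp only [neg_mul, ← ellProfile_three_add_sqrt_three]
  refine ⟨fun r _ hr => ?_, fun r hr => deriv_deriv_ell_of_half_le hr, fun r hr₀ hr => ?_,
    ?_, fun r hr => neg_ellProfile_three_add_sqrt_three_le_deriv_deriv_ell hr,
    neg_lt_neg ellProfile_three_add_sqrt_three_lt⟩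
  · simpa only [neg_mul] using deriv_deriv_ell_of_lt_half hr
  · rw [deriv_deriv_ell_of_lt_half hr]
    have := mul_pos (mul_pos hr₀ (zpow_pos (by linarith : (0 : ℝ) < 1/2 - r) (-4)))
      (exp_pos (-(1/2 - r)⁻¹))
    linarith
  · have h : √3 / 6 < 1/2 := by
      have : √3 < 3 := by rw [sqrt_lt' (by norm_num)]; norm_num
      linarith
    rw [deriv_deriv_ell_eq_neg_ellProfile h, inv_half_sub_sqrt_three_div_six]
end

section
/- On the interval [0, t₀] the function h is nonincreasing (and strictly decreasing on (0, t₀]) and satisfies 0 ≤ h(t) ≤ 1 = h(0) for all t ∈ [0, t₀]. -/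
/-- The comparison function `h(t) = cos(√k t) - (θ/√k) sin(√k t)` (case `k > 0`). -/
noncomputable def hfun (k θ : ℝ) (t : ℝ) : ℝ :=
  Real.cos (Real.sqrt k * t) - (θ / Real.sqrt k) * Real.sin (Real.sqrt k * t)

/-- The first zero `t₀ = (1/√k) arcsin(√(k/(k+θ²)))` of `h`. -/
noncomputable def t0 (k θ : ℝ) : ℝ :=
  (1 / Real.sqrt k) * Real.arcsin (Real.sqrt (k / (k + θ^2)))

/-!
Writing `s = √k`, we have `h(t) = g(s t)` with `g(x) = cos x - (θ/s) sin x`. Since `θ ≥ 0`, `g` is the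
sum of the strictly decreasing `cos` and the nonincreasing `-(θ/s) sin` on `[0, π/2]`, hence strictly
decreasing there, and `s t₀ = arcsin √(k/(k+θ²)) ∈ (0, π/2]`. At that angle `sin = s/√(k+θ²)` and
`cos = θ/√(k+θ²)`, so `h(t₀) = 0`; the bounds `0 ≤ h ≤ 1` then follow from monotonicity.
-/

open Real Set

theorem strictAntiOn_cos_sub_mul_sin {a : ℝ} (ha : 0 ≤ a) :
    StrictAntiOn (fun x => cos x - a * sin x) (Icc 0 (π / 2)) := by
  have hcos : StrictAntiOn cos (Icc 0 (π / 2)) :=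
    strictAntiOn_cos.mono (Icc_subset_Icc_right (by linarith [pi_pos]))
  have hsin : MonotoneOn sin (Icc 0 (π / 2)) :=
    strictMonoOn_sin.monotoneOn.mono (Icc_subset_Icc_left (by linarith [pi_pos]))
  have hneg : AntitoneOn (fun x => -(a * sin x)) (Icc 0 (π / 2)) := fun x hx y hy hxy =>
    neg_le_neg (mul_le_mul_of_nonneg_left (hsin hx hy hxy) ha)
  simpa only [sub_eq_add_neg] using hcos.add_antitone hneg

section

variable {k : ℝ} (θ : ℝ)

theorem sqrt_mul_t0 (hk : 0 < k) : √k * t0 k θ = arcsin √(k / (k + θ ^ 2)) := by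
  have : √k ≠ 0 := (sqrt_pos.mpr hk).ne'
  unfold t0
  field_simp

theorem t0_pos (hk : 0 < k) : 0 < t0 k θ :=
  mul_pos (by positivity) (arcsin_pos.mpr (by positivity))

variable {θ}

theorem hfun_t0 (hk : 0 < k) (hθ : 0 ≤ θ) : hfun k θ (t0 k θ) = 0 := by
  have hkθ : 0 < k + θ ^ 2 := by positivity
  have hsin : √(k / (k + θ ^ 2)) = √k / √(k + θ ^ 2) := sqrt_div hk.le _
  have hcos : √(1 - √(k / (k + θ ^ 2)) ^ 2) = θ / √(k + θ ^ 2) := by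
    have : 1 - k / (k + θ ^ 2) = θ ^ 2 / (k + θ ^ 2) := by field_simp; ring
    rw [sq_sqrt (by positivity), this, sqrt_div (sq_nonneg θ), sqrt_sq hθ]
  have hle : √(k / (k + θ ^ 2)) ≤ 1 :=
    sqrt_le_one.mpr ((div_le_one hkθ).mpr (by nlinarith))
  have : √k ≠ 0 := (sqrt_pos.mpr hk).ne'
  rw [hfun, sqrt_mul_t0 θ hk, cos_arcsin, hcos,
    sin_arcsin (by linarith [sqrt_nonneg (k / (k + θ ^ 2))]) hle, hsin]
  field_simp
  ring

theorem strictAntiOn_hfun (hk : 0 < k) (hθ : 0 ≤ θ) :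
    StrictAntiOn (hfun k θ) (Icc 0 (t0 k θ)) := by
  have hs : 0 < √k := sqrt_pos.mpr hk
  have hmaps : MapsTo (√k * ·) (Icc 0 (t0 k θ)) (Icc 0 (π / 2)) := fun t ht =>
    ⟨by nlinarith [ht.1], by
      nlinarith [ht.2, sqrt_mul_t0 θ hk, arcsin_le_pi_div_two √(k / (k + θ ^ 2))]⟩
  exact (strictAntiOn_cos_sub_mul_sin (by positivity)).comp_strictMonoOn
    ((strictMono_mul_left_of_pos hs).strictMonoOn _) hmaps

end

/-- On `[0, t₀]` the function `h` is nonincreasing (strictly decreasing on `(0, t₀]`)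
and satisfies `0 ≤ h(t) ≤ 1 = h(0)` for all `t ∈ [0, t₀]`. -/
theorem hfun_monotone (k θ : ℝ) (hk : 0 < k) (hθ : 0 ≤ θ) :
    AntitoneOn (hfun k θ) (Set.Icc 0 (t0 k θ)) ∧
    StrictAntiOn (hfun k θ) (Set.Ioc 0 (t0 k θ)) ∧
    hfun k θ 0 = 1 ∧
    ∀ t ∈ Set.Icc (0:ℝ) (t0 k θ), 0 ≤ hfun k θ t ∧ hfun k θ t ≤ 1 := by
  have hanti := strictAntiOn_hfun hk hθ
  have h0 : hfun k θ 0 = 1 := by simp [hfun]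
  have hpos := (t0_pos θ hk).le
  refine ⟨hanti.antitoneOn, hanti.mono Ioc_subset_Icc_self, h0, fun t ht => ⟨?_, ?_⟩⟩
  · simpa only [hfun_t0 hk hθ] using hanti.antitoneOn ht ⟨hpos, le_rfl⟩ ht.2
  · simpa only [h0] using hanti.antitoneOn ⟨le_rfl, hpos⟩ ht ht.1
end

section
/- The function g satisfies g(0) = 0, g is differentiable on [0, r₁) with g'(r) = (σ e²/4)·ℓ'(H(r)/(2H(r₁)))·h(r) for all r ∈ [0, r₁), and the (right) derivative at 0 equals σ: g'(0) = σ. -/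
/-- `H(r) = (√(k+θ²)/k) cos(arcsin(√(k/(k+θ²))) - √k · min(r, r₁)) - θ/k`. -/
noncomputable def Hfun (k θ r₁ : ℝ) (r : ℝ) : ℝ :=
  (Real.sqrt (k + θ^2) / k) *
    Real.cos (Real.arcsin (Real.sqrt (k / (k + θ^2))) - Real.sqrt k * min r r₁) - θ / k

/-- `g(r) = (σ e²/2) ℓ(H(r)/(2H(r₁))) H(r₁)`, i.e. the function `log φ` of the paper. -/
noncomputable def gfun (k θ r₁ σ : ℝ) (r : ℝ) : ℝ :=
  (σ * Real.exp 2 / 2) * ell (Hfun k θ r₁ r / (2 * Hfun k θ r₁ r₁)) * Hfun k θ r₁ r₁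

/-! On `[0, r₁]` the clipped function `H` is the primitive `sin (√k r) / √k - (θ / k) (1 - cos (√k r))`
of `h` vanishing at `0`. Since `h t = (√(k + θ²) / √k) sin (√k t₀ - √k t)` with `√k t₀ ≤ π / 2`,
`h > 0` on `[0, t₀)`, so `H` increases strictly on `[0, r₁]`. Hence `H r₁ > 0` and the argument
`H r / (2 H r₁)` of `ℓ` stays below `1 / 2`, where `ℓ` is smooth, and the chain rule applies.
At `0`, `H = 0`, `h = 1` and `ℓ' 0 = 4 e⁻²`. -/

open Real Set

lemma hasDerivAt_ell {x : ℝ} (hx : x < 1 / 2) :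
    HasDerivAt ell (exp (-2 / (1 - 2 * x)) * (4 / (1 - 2 * x) ^ 2)) x := by
  have hne : 1 - 2 * x ≠ 0 := by linarith
  have hinner : HasDerivAt (fun y : ℝ => -2 / (1 - 2 * y)) (-(4 / (1 - 2 * x) ^ 2)) x := by
    refine ((hasDerivAt_const x (-2 : ℝ)).div
      (((hasDerivAt_id' x).const_mul 2).const_sub 1) hne).congr_deriv ?_
    ring
  have hbranch := (hasDerivAt_const x (exp (-2))).sub hinner.exp
  refine (hbranch.congr_deriv (by ring)).congr_of_eventuallyEq ?_
  filter_upwards [Iio_mem_nhds hx] with y hy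
  exact if_pos hy

lemma ell_zero : ell 0 = 0 := by
  norm_num [ell]

lemma deriv_ell_zero : deriv ell 0 = 4 * exp (-2) := by
  rw [(hasDerivAt_ell (by norm_num)).deriv]
  norm_num [mul_comm]

section Comparison

variable {k θ : ℝ}

lemma sin_arcsin_sqrt_div (hk : 0 ≤ k) :
    sin (arcsin √(k / (k + θ ^ 2))) = √k / √(k + θ ^ 2) := by
  have hle : k / (k + θ ^ 2) ≤ 1 := div_le_one_of_le₀ (by nlinarith) (by positivity)
  rw [sin_arcsin (by linarith [sqrt_nonneg (k / (k + θ ^ 2))]) (sqrt_le_one.mpr hle),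
    sqrt_div hk]

lemma cos_arcsin_sqrt_div (hk : 0 < k) (hθ : 0 ≤ θ) :
    cos (arcsin √(k / (k + θ ^ 2))) = θ / √(k + θ ^ 2) := by
  have hK : 0 < k + θ ^ 2 := by positivity
  rw [cos_arcsin, sq_sqrt (by positivity),
    show 1 - k / (k + θ ^ 2) = θ ^ 2 / (k + θ ^ 2) by field_simp; ring,
    sqrt_div (sq_nonneg θ), sqrt_sq hθ]

noncomputable def hfunPrimitive (k θ t : ℝ) : ℝ :=
  sin (√k * t) / √k - θ / k * (1 - cos (√k * t))

lemma hasDerivAt_hfunPrimitive (hk : 0 < k) (t : ℝ) :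
    HasDerivAt (hfunPrimitive k θ) (hfun k θ t) t := by
  have hsk : √k ≠ 0 := (sqrt_pos.mpr hk).ne'
  have hlin : HasDerivAt (fun s : ℝ => √k * s) √k t := by
    simpa using (hasDerivAt_id t).const_mul √k
  refine ((hlin.sin.div_const √k).sub ((hlin.cos.const_sub 1).const_mul (θ / k))).congr_deriv ?_
  rw [hfun, show θ / k = θ / √k / √k by rw [div_div, mul_self_sqrt hk.le]]
  field_simp

lemma hfunPrimitive_zero : hfunPrimitive k θ 0 = 0 := by
  simp [hfunPrimitive]

lemma Hfun_eq_hfunPrimitive (hk : 0 < k) (hθ : 0 ≤ θ) {r₁ r : ℝ} (hr : r ≤ r₁) :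
    Hfun k θ r₁ r = hfunPrimitive k θ r := by
  have hsK : √(k + θ ^ 2) ≠ 0 := (sqrt_pos.mpr (by positivity)).ne'
  rw [Hfun, hfunPrimitive, min_eq_left hr, cos_sub, sin_arcsin_sqrt_div hk.le,
    cos_arcsin_sqrt_div hk hθ]
  field_simp
  linear_combination sin (√k * r) * mul_self_sqrt hk.le

lemma hfun_eq_mul_sin (hk : 0 < k) (hθ : 0 ≤ θ) (t : ℝ) :
    hfun k θ t = √(k + θ ^ 2) / √k * sin (√k * t0 k θ - √k * t) := by
  have hsk : √k ≠ 0 := (sqrt_pos.mpr hk).ne'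
  have hsK : √(k + θ ^ 2) ≠ 0 := (sqrt_pos.mpr (by positivity)).ne'
  rw [t0, ← mul_assoc, mul_one_div_cancel hsk, one_mul, sin_sub, sin_arcsin_sqrt_div hk.le,
    cos_arcsin_sqrt_div hk hθ, hfun]
  field_simp

lemma hfun_pos (hk : 0 < k) (hθ : 0 ≤ θ) {t : ℝ} (ht₀ : 0 ≤ t) (ht : t < t0 k θ) :
    0 < hfun k θ t := by
  have hsk : 0 < √k := sqrt_pos.mpr hk
  have hα : √k * t0 k θ ≤ π / 2 := by
    rw [t0, ← mul_assoc, mul_one_div_cancel hsk.ne', one_mul]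
    exact arcsin_le_pi_div_two _
  have hlt : √k * t < √k * t0 k θ := mul_lt_mul_of_pos_left ht hsk
  have hnonneg : 0 ≤ √k * t := by positivity
  rw [hfun_eq_mul_sin hk hθ]
  have := sin_pos_of_pos_of_lt_pi (sub_pos.mpr hlt) (by linarith [pi_pos])
  positivity

lemma hfunPrimitive_strictMonoOn (hk : 0 < k) (hθ : 0 ≤ θ) :
    StrictMonoOn (hfunPrimitive k θ) (Icc 0 (t0 k θ)) := by
  refine strictMonoOn_of_deriv_pos (convex_Icc _ _)
    (fun t _ => (hasDerivAt_hfunPrimitive hk t).continuousAt.continuousWithinAt) ?_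
  rw [interior_Icc]
  intro t ht
  rw [(hasDerivAt_hfunPrimitive hk t).deriv]
  exact hfun_pos hk hθ ht.1.le ht.2

end Comparison

section Clipped

variable {k θ r₁ : ℝ}

lemma Hfun_zero (hk : 0 < k) (hθ : 0 ≤ θ) (hr₁ : 0 ≤ r₁) : Hfun k θ r₁ 0 = 0 := by
  rw [Hfun_eq_hfunPrimitive hk hθ hr₁, hfunPrimitive_zero]

lemma Hfun_lt_Hfun_self (hk : 0 < k) (hθ : 0 ≤ θ) (hr₁' : r₁ ≤ t0 k θ) {r : ℝ}
    (hr : r ∈ Ico 0 r₁) : Hfun k θ r₁ r < Hfun k θ r₁ r₁ := by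
  rw [Hfun_eq_hfunPrimitive hk hθ hr.2.le, Hfun_eq_hfunPrimitive hk hθ le_rfl]
  exact hfunPrimitive_strictMonoOn hk hθ ⟨hr.1, hr.2.le.trans hr₁'⟩
    ⟨hr.1.trans hr.2.le, hr₁'⟩ hr.2

lemma Hfun_self_pos (hk : 0 < k) (hθ : 0 ≤ θ) (hr₁ : 0 < r₁) (hr₁' : r₁ ≤ t0 k θ) :
    0 < Hfun k θ r₁ r₁ := by
  simpa [Hfun_zero hk hθ hr₁.le] using Hfun_lt_Hfun_self hk hθ hr₁' ⟨le_rfl, hr₁⟩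

lemma hasDerivAt_Hfun (hk : 0 < k) (hθ : 0 ≤ θ) {r : ℝ} (hr : r < r₁) :
    HasDerivAt (Hfun k θ r₁) (hfun k θ r) r := by
  refine (hasDerivAt_hfunPrimitive hk r).congr_of_eventuallyEq ?_
  filter_upwards [Iio_mem_nhds hr] with s hs
  exact Hfun_eq_hfunPrimitive hk hθ hs.le

lemma hasDerivAt_gfun (σ : ℝ) (hk : 0 < k) (hθ : 0 ≤ θ) (hr₁ : 0 < r₁)
    (hr₁' : r₁ ≤ t0 k θ) {r : ℝ} (hr : r ∈ Ico 0 r₁) :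
    HasDerivAt (gfun k θ r₁ σ)
      ((σ * exp 2 / 4) * deriv ell (Hfun k θ r₁ r / (2 * Hfun k θ r₁ r₁)) * hfun k θ r) r := by
  have hpos := Hfun_self_pos hk hθ hr₁ hr₁'
  have harg : Hfun k θ r₁ r / (2 * Hfun k θ r₁ r₁) < 1 / 2 := by
    rw [div_lt_iff₀ (by positivity)]
    linarith [Hfun_lt_Hfun_self hk hθ hr₁' hr]
  have hell := (hasDerivAt_ell harg).differentiableAt.hasDerivAt
  have hcomp := hell.comp r ((hasDerivAt_Hfun hk hθ hr.2).div_const (2 * Hfun k θ r₁ r₁))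
  refine ((hcomp.const_mul (σ * exp 2 / 2)).mul_const (Hfun k θ r₁ r₁)).congr_deriv ?_
  field_simp
  ring

end Clipped

theorem gfun_deriv_general (k θ r₁ σ : ℝ) (hk : 0 < k) (hθ : 0 ≤ θ)
    (hr₁ : 0 < r₁) (hr₁' : r₁ ≤ t0 k θ) :
    gfun k θ r₁ σ 0 = 0 ∧
    (∀ r ∈ Set.Ico (0:ℝ) r₁, HasDerivAt (gfun k θ r₁ σ)
      ((σ * Real.exp 2 / 4) * deriv ell (Hfun k θ r₁ r / (2 * Hfun k θ r₁ r₁))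
        * hfun k θ r) r) ∧
    deriv (gfun k θ r₁ σ) 0 = σ := by
  have hH0 := Hfun_zero hk hθ hr₁.le
  refine ⟨by simp [gfun, hH0, ell_zero], fun r hr => hasDerivAt_gfun σ hk hθ hr₁ hr₁' hr, ?_⟩
  rw [(hasDerivAt_gfun σ hk hθ hr₁ hr₁' ⟨le_rfl, hr₁⟩).deriv, hH0, zero_div, deriv_ell_zero]
  have hexp : exp 2 * exp (-2) = 1 := by rw [← exp_add]; norm_num
  simp only [hfun, mul_zero, cos_zero, sin_zero, sub_zero]
  linear_combination σ * hexp

/-- `g(0) = 0`; `g` is differentiable on `[0, r₁)` with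
`g'(r) = (σe²/4) ℓ'(H(r)/(2H(r₁))) h(r)` there; and `g'(0) = σ`. -/
theorem gfun_deriv (k θ r₁ σ : ℝ) (hk : 0 < k) (hθ : 0 ≤ θ)
    (hr₁ : 0 < r₁) (hr₁' : r₁ ≤ t0 k θ) (hσ : 0 ≤ σ) :
    gfun k θ r₁ σ 0 = 0 ∧
    (∀ r ∈ Set.Ico (0:ℝ) r₁, HasDerivAt (gfun k θ r₁ σ)
      ((σ * Real.exp 2 / 4) * deriv ell (Hfun k θ r₁ r / (2 * Hfun k θ r₁ r₁))
        * hfun k θ r) r) ∧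
    deriv (gfun k θ r₁ σ) 0 = σ :=
  gfun_deriv_general k θ r₁ σ hk hθ hr₁ hr₁'
end
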